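/- Let X and Y be independent exponential random variables with mean 1, and let a, b > 0, I ≥ 0. For τ ≥ 1, the CDF of T₂ = max{aX, bY}/(min{aX, bY} + I) equals 1 − [a/(a+bτ)]e^{−τI/a} − [b/(b+aτ)]e^{−τI/b}. -/

import Mathlib

/-!
Write `U = aX` and `V = bY`: they are independent exponential variables with rates `1/a` and
`1/b`, almost surely positive. For positive `U, V`, the event `T₂ ≤ τ` is the complement of
`{τ(V + I) < U} ∪ {τ(U + I) < V}`, and for `τ ≥ 1` these two events are disjoint. By Fubini,
`P(τ(V + I) < U) = E[exp(-(τ/a)(V + I))] = a/(a + bτ) · exp(-τI/a)`, and symmetrically for the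
other event.
-/

open MeasureTheory ProbabilityTheory Real Set

lemma max_div_min_add_le_iff {u v I τ : ℝ} (hu : 0 < u) (hv : 0 < v) (hI : 0 ≤ I) :
    max u v / (min u v + I) ≤ τ ↔ u ≤ τ * v + τ * I ∧ v ≤ τ * u + τ * I := by
  rw [div_le_iff₀ (add_pos_of_pos_of_nonneg (lt_min hu hv) hI)]
  rcases le_total u v with h | h
  · rw [max_eq_right h, min_eq_left h]
    constructor
    · intro h'; constructor <;> nlinarith
    · intro h'; linarith [h'.2]
  · rw [max_eq_left h, min_eq_right h]
    constructor
    · intro h'; constructor <;> nlinarith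
    · intro h'; linarith [h'.1]

namespace ProbabilityTheory

variable {r : ℝ}

lemma expMeasure_Iic (hr : 0 < r) (x : ℝ) :
    expMeasure r (Iic x) = ENNReal.ofReal (if 0 ≤ x then 1 - exp (-(r * x)) else 0) := by
  rw [expMeasure, gammaMeasure, withDensity_apply _ measurableSet_Iic]
  exact lintegral_exponentialPDF_eq_antiDeriv hr x

lemma expMeasure_Ioi (hr : 0 < r) {x : ℝ} (hx : 0 ≤ x) :
    expMeasure r (Ioi x) = ENNReal.ofReal (exp (-(r * x))) := by
  have := isProbabilityMeasure_expMeasure hr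
  have hexp : exp (-(r * x)) ≤ 1 := exp_le_one_iff.mpr (by nlinarith)
  rw [← compl_Iic, prob_compl_eq_one_sub measurableSet_Iic, expMeasure_Iic hr, if_pos hx,
    ← ENNReal.ofReal_one, ← ENNReal.ofReal_sub _ (sub_nonneg.mpr hexp), sub_sub_cancel]

lemma ae_pos_expMeasure (hr : 0 < r) : ∀ᵐ x ∂expMeasure r, 0 < x := by
  have : {x : ℝ | ¬0 < x} = Iic 0 := by ext; simp
  rw [ae_iff, this, expMeasure_Iic hr]
  simp

lemma lintegral_exp_neg_mul_add_expMeasure (hr : 0 < r) {c : ℝ} (hc : 0 < r + c) (d : ℝ) :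
    ∫⁻ y, ENNReal.ofReal (exp (-(c * y + d))) ∂expMeasure r
      = ENNReal.ofReal (r * exp (-d) / (r + c)) := by
  have hdens : ∀ y, (exponentialPDF r * fun y ↦ ENNReal.ofReal (exp (-(c * y + d)))) y
      = (Ici 0).indicator (fun y ↦ ENNReal.ofReal (r * exp (-d) * exp (-(r + c) * y))) y := by
    intro y
    by_cases hy : 0 ≤ y
    · rw [indicator_of_mem (mem_Ici.mpr hy), Pi.mul_apply, exponentialPDF_eq, if_pos hy,
        ← ENNReal.ofReal_mul (by positivity), mul_assoc, ← exp_add, mul_assoc, ← exp_add]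
      ring_nf
    · rw [indicator_of_notMem (by simpa using hy), Pi.mul_apply, exponentialPDF_eq, if_neg hy,
        ENNReal.ofReal_zero, zero_mul]
  have hint : IntegrableOn (fun y ↦ r * exp (-d) * exp (-(r + c) * y)) (Ici 0) :=
    (integrableOn_Ici_iff_integrableOn_Ioi).mpr
      ((integrableOn_exp_mul_Ioi (neg_lt_zero.mpr hc) 0).const_mul _)
  have hmeas : Measurable (exponentialPDF r) := (measurable_exponentialPDFReal r).ennreal_ofReal
  rw [expMeasure, gammaMeasure, show gammaPDF 1 r = exponentialPDF r from rfl,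
    lintegral_withDensity_eq_lintegral_mul _ hmeas (by fun_prop), lintegral_congr hdens,
    lintegral_indicator measurableSet_Ici,
    ← ofReal_integral_eq_lintegral_ofReal hint (ae_of_all _ fun y ↦ by positivity),
    integral_Ici_eq_integral_Ioi, integral_const_mul, integral_exp_mul_Ioi (neg_lt_zero.mpr hc),
    mul_zero, exp_zero]
  field_simp

lemma map_const_mul_expMeasure (hr : 0 < r) {a : ℝ} (ha : 0 < a) :
    (expMeasure r).map (a * ·) = expMeasure (r / a) := by
  have := isProbabilityMeasure_expMeasure hr
  have := isProbabilityMeasure_expMeasure (div_pos hr ha)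
  refine Measure.ext_of_Iic _ _ fun x ↦ ?_
  have hpre : (a * ·) ⁻¹' Iic x = Iic (x / a) := by
    ext y; simp [le_div_iff₀ ha, mul_comm]
  rw [Measure.map_apply (measurable_const_mul a) measurableSet_Iic, hpre, expMeasure_Iic hr,
    expMeasure_Iic (div_pos hr ha)]
  by_cases hx : 0 ≤ x
  · rw [if_pos (div_nonneg hx ha.le), if_pos hx, mul_div, div_mul_eq_mul_div]
  · rw [if_neg (by rwa [le_div_iff₀ ha, zero_mul]), if_neg hx]

variable {Ω : Type*} [MeasurableSpace Ω] {P : Measure Ω} {U V : Ω → ℝ} {s : ℝ}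

lemma aemeasurable_of_map_eq_expMeasure (hr : 0 < r) (hU : P.map U = expMeasure r) :
    AEMeasurable U P :=
  have := isProbabilityMeasure_expMeasure hr
  aemeasurable_of_map_neZero (by rw [hU]; infer_instance)

lemma ae_pos_of_map_eq_expMeasure (hr : 0 < r) (hU : P.map U = expMeasure r) :
    ∀ᵐ ω ∂P, 0 < U ω :=
  ae_of_ae_map (aemeasurable_of_map_eq_expMeasure hr hU) (hU ▸ ae_pos_expMeasure hr)

lemma map_const_mul_of_map_eq_expMeasure (hr : 0 < r) {c : ℝ} (hc : 0 < c)
    (hU : P.map U = expMeasure r) : P.map (fun ω ↦ c * U ω) = expMeasure (r / c) := by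
  rw [← map_const_mul_expMeasure hr hc, ← hU, AEMeasurable.map_map_of_aemeasurable
    (by fun_prop) (aemeasurable_of_map_eq_expMeasure hr hU)]
  rfl

lemma measure_mul_add_lt_of_indepFun [IsFiniteMeasure P] (hr : 0 < r) (hs : 0 < s)
    (hUV : IndepFun U V P) (hU : P.map U = expMeasure r) (hV : P.map V = expMeasure s)
    {c d : ℝ} (hc : 0 ≤ c) (hd : 0 ≤ d) :
    P {ω | c * V ω + d < U ω} = ENNReal.ofReal (s * exp (-(r * d)) / (s + r * c)) := by
  have := isProbabilityMeasure_expMeasure hr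
  have := isProbabilityMeasure_expMeasure hs
  have hUm := aemeasurable_of_map_eq_expMeasure hr hU
  have hVm := aemeasurable_of_map_eq_expMeasure hs hV
  have hmap : P.map (fun ω ↦ (U ω, V ω)) = (expMeasure r).prod (expMeasure s) := by
    rw [← hU, ← hV]; exact (indepFun_iff_map_prod_eq_prod_map_map hUm hVm).mp hUV
  have hmeas : MeasurableSet {p : ℝ × ℝ | c * p.2 + d < p.1} :=
    measurableSet_lt (by fun_prop) (by fun_prop)
  calc P {ω | c * V ω + d < U ω}
      = P.map (fun ω ↦ (U ω, V ω)) {p | c * p.2 + d < p.1} :=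
        (Measure.map_apply_of_aemeasurable (hUm.prodMk hVm) hmeas).symm
    _ = ∫⁻ y, expMeasure r (Ioi (c * y + d)) ∂expMeasure s := by
        rw [hmap, Measure.prod_apply_symm hmeas]; rfl
    _ = ∫⁻ y, ENNReal.ofReal (exp (-((r * c) * y + r * d))) ∂expMeasure s := by
        refine lintegral_congr_ae ?_
        filter_upwards [ae_pos_expMeasure hs] with y hy
        rw [expMeasure_Ioi hr (by positivity)]
        ring_nf
    _ = _ := lintegral_exp_neg_mul_add_expMeasure hs (by positivity) _

theorem measureReal_max_div_min_add_le_of_indepFun [IsProbabilityMeasure P] (hr : 0 < r)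
    (hs : 0 < s) {I τ : ℝ} (hI : 0 ≤ I) (hτ : 1 ≤ τ) (hUV : IndepFun U V P)
    (hU : P.map U = expMeasure r) (hV : P.map V = expMeasure s) :
    P.real {ω | max (U ω) (V ω) / (min (U ω) (V ω) + I) ≤ τ}
      = 1 - s * exp (-(r * (τ * I))) / (s + r * τ)
        - r * exp (-(s * (τ * I))) / (r + s * τ) := by
  have hUm := aemeasurable_of_map_eq_expMeasure hr hU
  have hVm := aemeasurable_of_map_eq_expMeasure hs hV
  set A : Set Ω := {ω | τ * V ω + τ * I < U ω}
  set B : Set Ω := {ω | τ * U ω + τ * I < V ω}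
  have hAm : NullMeasurableSet A P := nullMeasurableSet_lt ((hVm.const_mul τ).add_const _) hUm
  have hBm : NullMeasurableSet B P := nullMeasurableSet_lt ((hUm.const_mul τ).add_const _) hVm
  have hS : ({ω | max (U ω) (V ω) / (min (U ω) (V ω) + I) ≤ τ} : Set Ω)
      =ᵐ[P] ((A ∪ B)ᶜ : Set Ω) := by
    rw [Filter.eventuallyEq_set]
    filter_upwards [ae_pos_of_map_eq_expMeasure hr hU, ae_pos_of_map_eq_expMeasure hs hV]
      with ω hu hv
    simp only [A, B, mem_ofPred_eq, mem_compl_iff, mem_union, not_or, not_lt]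
    exact max_div_min_add_le_iff hu hv hI
  have hAB : AEDisjoint P A B := by
    rw [AEDisjoint, measure_eq_zero_iff_ae_notMem]
    filter_upwards [ae_pos_of_map_eq_expMeasure hr hU, ae_pos_of_map_eq_expMeasure hs hV]
      with ω hu hv ⟨hA, hB⟩
    simp only [A, B, mem_ofPred_eq] at hA hB
    nlinarith
  rw [measureReal_congr hS, probReal_compl_eq_one_sub₀ (hAm.union hBm),
    measureReal_union₀ hBm hAB, measureReal_def, measureReal_def,
    measure_mul_add_lt_of_indepFun hr hs hUV hU hV (by linarith) (by positivity),
    measure_mul_add_lt_of_indepFun hs hr hUV.symm hV hU (by linarith) (by positivity),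
    ENNReal.toReal_ofReal (by positivity), ENNReal.toReal_ofReal (by positivity)]
  ring

end ProbabilityTheory

/-- CDF of T₂ = max{aX,bY}/(min{aX,bY}+I) for independent Exp(1) X, Y, for τ ≥ 1. -/
theorem exp_T2_cdf_ge_one
    {Ω : Type*} [MeasurableSpace Ω] (P : Measure Ω) [IsProbabilityMeasure P]
    (X Y : Ω → ℝ) (a b I τ : ℝ)
    (ha : 0 < a) (hb : 0 < b) (hI : 0 ≤ I) (hτ : 1 ≤ τ)
    (hXY : IndepFun X Y P)
    (hX : Measure.map X P = expMeasure 1)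
    (hY : Measure.map Y P = expMeasure 1) :
    (P {ω | max (a * X ω) (b * Y ω) / (min (a * X ω) (b * Y ω) + I) ≤ τ}).toReal =
      1 - a / (a + b * τ) * Real.exp (-(τ * I / a))
        - b / (b + a * τ) * Real.exp (-(τ * I / b)) := by
  have hUV : IndepFun (fun ω ↦ a * X ω) (fun ω ↦ b * Y ω) P :=
    hXY.comp (measurable_const_mul a) (measurable_const_mul b)
  rw [← measureReal_def, measureReal_max_div_min_add_le_of_indepFun (one_div_pos.2 ha)
    (one_div_pos.2 hb) hI hτ hUV (map_const_mul_of_map_eq_expMeasure one_pos ha hX)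
    (map_const_mul_of_map_eq_expMeasure one_pos hb hY)]
  field_simp
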